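/- Assume a² < b². The function ũ(t) = cosh(ωt) − ((a+b)/ω) sinh(ωt), with ω = √(b²−a²), has a real zero if and only if ab > 0, in which case its unique zero is t₀ = (1/ω) arctanh(ω/(a+b)). -/

import Mathlib

/-- The inverse hyperbolic tangent. -/
noncomputable def arctanh (x : ℝ) : ℝ := (1 / 2) * Real.log ((1 + x) / (1 - x))

/-! Since `cosh > 0`, `ũ(t) = 0` exactly when `tanh (ω t) = ω / (a + b)`. As `tanh` is a bijection
of `ℝ` onto `(-1, 1)` with inverse `artanh`, this has a solution iff `ω² < (a + b)²`, i.e.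
`b² - a² < (a + b)²`, which under `a² < b²` is equivalent to `ab > 0`; the solution is then unique. -/

open Real Set

theorem arctanh_eq_artanh {x : ℝ} (hx : x ∈ Icc (-1) 1) : arctanh x = artanh x :=
  (artanh_eq_half_log hx).symm

theorem Real.tanh_eq_iff_eq_artanh {x y : ℝ} (hx : x ∈ Ioo (-1) 1) :
    tanh y = x ↔ y = artanh x := by
  constructor
  · rintro rfl
    exact (artanh_tanh y).symm
  · rintro rfl
    exact tanh_artanh hx

theorem Real.exists_tanh_eq_iff {x : ℝ} : (∃ y, tanh y = x) ↔ x ∈ Ioo (-1) 1 := by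
  constructor
  · rintro ⟨y, rfl⟩
    exact ⟨neg_one_lt_tanh y, tanh_lt_one y⟩
  · intro hx
    exact ⟨artanh x, tanh_artanh hx⟩

theorem Real.cosh_sub_div_mul_sinh_eq_zero_iff {p q y : ℝ} (hp : p ≠ 0) (hq : q ≠ 0) :
    cosh y - p / q * sinh y = 0 ↔ tanh y = q / p := by
  rw [tanh_eq_sinh_div_cosh, div_eq_div_iff (cosh_pos y).ne' hp, sub_eq_zero,
    div_mul_eq_mul_div, eq_div_iff hq, eq_comm]
  constructor <;> intro h <;> linarith

theorem div_mem_Ioo_neg_one_one_iff {ω s : ℝ} (hs : s ≠ 0) :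
    ω / s ∈ Ioo (-1) 1 ↔ ω ^ 2 < s ^ 2 := by
  rw [mem_Ioo, ← abs_lt, abs_div, div_lt_one (abs_pos.mpr hs), sq_lt_sq]

theorem sq_sub_sq_lt_add_sq_iff {a b : ℝ} (h : a ^ 2 < b ^ 2) :
    b ^ 2 - a ^ 2 < (a + b) ^ 2 ↔ 0 < a * b :=
  ⟨fun _ => by nlinarith, fun _ => by nlinarith⟩

theorem zeros_C2 (a b : ℝ) (h : a^2 < b^2)
    (ω : ℝ) (hω : ω = Real.sqrt (b^2 - a^2))
    (u : ℝ → ℝ)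
    (hu : ∀ t, u t = Real.cosh (ω * t) - ((a + b) / ω) * Real.sinh (ω * t)) :
    ((∃ t : ℝ, u t = 0) ↔ a * b > 0) ∧
    (a * b > 0 → ∀ t : ℝ, u t = 0 ↔ t = (1 / ω) * arctanh (ω / (a + b))) := by
  have hω_pos : 0 < ω := hω ▸ sqrt_pos.mpr (sub_pos.mpr h)
  have hab_ne : a + b ≠ 0 := by
    rintro hs
    obtain rfl : b = -a := by linarith
    simp at h
  have hu_zero (t : ℝ) : u t = 0 ↔ tanh (ω * t) = ω / (a + b) := by
    rw [hu, cosh_sub_div_mul_sinh_eq_zero_iff hab_ne hω_pos.ne']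
  have hmem : ω / (a + b) ∈ Ioo (-1) 1 ↔ 0 < a * b := by
    rw [div_mem_Ioo_neg_one_one_iff hab_ne, hω, sq_sqrt (sub_pos.mpr h).le,
      sq_sub_sq_lt_add_sq_iff h]
  refine ⟨?_, fun hab t => ?_⟩
  · simp only [hu_zero, gt_iff_lt, ← hmem, ← exists_tanh_eq_iff]
    exact ⟨fun ⟨t, ht⟩ => ⟨ω * t, ht⟩,
      fun ⟨y, hy⟩ => ⟨y / ω, by rwa [mul_div_cancel₀ y hω_pos.ne']⟩⟩
  · have hx := hmem.mpr hab
    rw [hu_zero, tanh_eq_iff_eq_artanh hx, arctanh_eq_artanh (Ioo_subset_Icc_self hx),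
      one_div_mul_eq_div, eq_div_iff hω_pos.ne', mul_comm]
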